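/- arXiv:2303.10866 — 4 statements merged into one kernel-verified Lean document; each statement's English description precedes it below -/
import Mathlib

section
/- Let D be a finite directed graph, S_min a minimal knot-free vertex deletion set, Z_min the sinks of D - S_min, and x in Z_min. Then S_min is disjoint from R^-(x), the set of vertices that can reach x via a directed path in D - N^+(x). -/
open Relation Set

variable {V : Type*}

/-- Arcs of the induced subgraph of the digraph `A` after deleting the vertex set `S`. -/
def delArcs (A : V → V → Prop) (S : Set V) : V → V → Prop :=
  fun u v => u ∉ S ∧ v ∉ S ∧ A u v

/-- `K` is a knot of the digraph `A`: a strongly connected component of size at least 2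
with no arc leaving it.  (A strongly connected set that is closed under out-arcs is
automatically a maximal strongly connected set, i.e. a strongly connected component.) -/
def IsKnot (A : V → V → Prop) (K : Set V) : Prop :=
  2 ≤ K.ncard ∧ (∀ u ∈ K, ∀ v ∈ K, Relation.ReflTransGen A u v) ∧
    (∀ u ∈ K, ∀ v, A u v → v ∈ K)

/-- A digraph is knot-free if it contains no knot. -/
def KnotFree (A : V → V → Prop) : Prop := ¬ ∃ K : Set V, IsKnot A K

/-- `S` is a knot-free vertex deletion set of the digraph `A`. -/
def IsKFVDS (A : V → V → Prop) (S : Set V) : Prop := KnotFree (delArcs A S)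

/-- `S` is an inclusion-wise minimal knot-free vertex deletion set. -/
def MinimalKFVDS (A : V → V → Prop) (S : Set V) : Prop :=
  IsKFVDS A S ∧ ∀ S' : Set V, S' ⊂ S → ¬ IsKFVDS A S'

/-- `S` is a minimum-size knot-free vertex deletion set. -/
def MinimumKFVDS (A : V → V → Prop) (S : Set V) : Prop :=
  IsKFVDS A S ∧ ∀ S' : Set V, IsKFVDS A S' → S.ncard ≤ S'.ncard

/-- `v` is a sink of the induced subgraph `D - S`. -/
def IsSinkIn (A : V → V → Prop) (S : Set V) (v : V) : Prop :=
  v ∉ S ∧ ∀ w, ¬ delArcs A S v w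

/-- The set of sinks of `D - S`. -/
def sinksIn (A : V → V → Prop) (S : Set V) : Set V := {v | IsSinkIn A S v}

/-- `N^+(x)`, the out-neighborhood of `x`. -/
def outNbrs (A : V → V → Prop) (x : V) : Set V := {v | A x v}

/-- `R^-(x)` : the set of vertices (including `x`) with a directed path to `x`
in `D - N^+(x)`. -/
def RminusSet (A : V → V → Prop) (x : V) : Set V :=
  {u | Relation.ReflTransGen (delArcs A (outNbrs A x)) u x}

/-- `R(x) = N^+(x) ∪ R^-(x)`. -/
def Rset (A : V → V → Prop) (x : V) : Set V := outNbrs A x ∪ RminusSet A x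

section Knots

variable {A : V → V → Prop}

namespace IsKnot

variable {K : Set V}

lemma exists_ne (hK : IsKnot A K) (u : V) : ∃ v ∈ K, v ≠ u := by
  by_contra! h
  have hle : K.ncard ≤ ({u} : Set V).ncard := Set.ncard_le_ncard h (Set.finite_singleton u)
  have := hK.1
  rw [Set.ncard_singleton] at hle
  omega

lemma exists_adj (hK : IsKnot A K) {u : V} (hu : u ∈ K) : ∃ v, A u v := by
  obtain ⟨v, hv, hvu⟩ := hK.exists_ne u
  rcases (hK.2.1 u hu v hv).cases_head with rfl | ⟨w, huw, -⟩
  · exact absurd rfl hvu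
  · exact ⟨w, huw⟩

lemma mem_of_reflTransGen (hK : IsKnot A K) {u v : V} (hu : u ∈ K)
    (huv : ReflTransGen A u v) : v ∈ K := by
  induction huv with
  | refl => exact hu
  | tail _ hbc ih => exact hK.2.2 _ ih _ hbc

lemma disjoint_of_delArcs {S : Set V} (hK : IsKnot (delArcs A S) K) : Disjoint K S :=
  Set.disjoint_left.2 fun _ hu => let ⟨_, huv⟩ := hK.exists_adj hu; huv.1

lemma delArcs_of_subset {S S' : Set V} (hK : IsKnot (delArcs A S') K) (hS' : S' ⊆ S)
    (hKS : Disjoint K S) : IsKnot (delArcs A S) K := by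
  refine ⟨hK.1, fun u hu v hv => ?_, fun u hu v huv => hK.2.2 u hu v ?_⟩
  · have huv := hK.2.1 u hu v hv
    clear hv
    induction huv with
    | refl => rfl
    | tail hub hbc ih =>
      have hb := hK.mem_of_reflTransGen hu hub
      exact ih.tail ⟨Set.disjoint_left.1 hKS hb,
        Set.disjoint_left.1 hKS (hK.2.2 _ hb _ hbc), hbc.2.2⟩
  · exact ⟨fun h => huv.1 (hS' h), fun h => huv.2.1 (hS' h), huv.2.2⟩

end IsKnot

lemma reflTransGen_delArcs_of_disjoint {S T : Set V} {u x : V}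
    (hS : Disjoint S {v | ReflTransGen (delArcs A T) v x})
    (hux : ReflTransGen (delArcs A T) u x) : ReflTransGen (delArcs A S) u x := by
  induction hux using ReflTransGen.head_induction_on with
  | refl => rfl
  | head hab hbx ih =>
    exact ReflTransGen.head ⟨Set.disjoint_left.1 hS.symm (ReflTransGen.head hab hbx),
      Set.disjoint_left.1 hS.symm hbx, hab.2.2⟩ ih

lemma eq_of_mem_RminusSet_of_adj {x w : V} (hw : w ∈ RminusSet A x) (hxw : A x w) : w = x := by
  rcases (hw : ReflTransGen _ w x).cases_head with rfl | ⟨_, hwc, -⟩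
  · rfl
  · exact absurd hxw hwc.1

/-- Deleting only `S \ R⁻(x)` cannot create a knot meeting `S`: such a knot would contain `x`
(follow the path from `R⁻(x)`), and the out-arc of `x` inside it would lead back into
`R⁻(x) ∩ N⁺(x)`. -/
lemma IsKnot.disjoint_of_mem_sinksIn {S K : Set V} {x : V} (hx : x ∈ sinksIn A S)
    (hK : IsKnot (delArcs A (S \ RminusSet A x)) K) : Disjoint K S := by
  have hR : Disjoint (S \ RminusSet A x) (RminusSet A x) := Set.disjoint_sdiff_left
  have hKS' := hK.disjoint_of_delArcs
  refine Set.disjoint_left.2 fun s hsK hsS => ?_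
  have hsR : s ∈ RminusSet A x := by
    by_contra hsR
    exact Set.disjoint_left.1 hKS' hsK ⟨hsS, hsR⟩
  have hxK : x ∈ K := hK.mem_of_reflTransGen hsK (reflTransGen_delArcs_of_disjoint hR hsR)
  obtain ⟨w, hxw⟩ := hK.exists_adj hxK
  have hwS : w ∈ S := by
    by_contra hwS
    exact hx.2 w ⟨hx.1, hwS, hxw.2.2⟩
  have hwR : w ∈ RminusSet A x := by
    by_contra hwR
    exact hxw.2.1 ⟨hwS, hwR⟩
  exact hx.1 (eq_of_mem_RminusSet_of_adj hwR hxw.2.2 ▸ hwS)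

end Knots

theorem stmt3_general (A : V → V → Prop) (Smin : Set V)
    (hS : MinimalKFVDS A Smin) (x : V) (hx : x ∈ sinksIn A Smin) :
    Disjoint Smin (RminusSet A x) := by
  by_contra hmeet
  have hproper : Smin \ RminusSet A x ⊂ Smin :=
    Set.sdiff_ssubset_left_iff.2 (Set.not_disjoint_iff_nonempty_inter.1 hmeet)
  obtain ⟨K, hK⟩ := not_not.1 (hS.2 _ hproper)
  exact hS.1 ⟨K, hK.delArcs_of_subset Set.sdiff_subset (hK.disjoint_of_mem_sinksIn hx)⟩

/-- If `x` is a sink of `D - S_min` for a minimal knot-free vertex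
deletion set `S_min`, then `S_min ∩ R^-(x) = ∅`. -/
theorem stmt3 [Fintype V] (A : V → V → Prop) (Smin : Set V)
    (hS : MinimalKFVDS A Smin) (x : V) (hx : x ∈ sinksIn A Smin) :
    Disjoint Smin (RminusSet A x) :=
  stmt3_general A Smin hS x hx
end

section
/- Let D be a finite directed graph, S_min a minimal knot-free vertex deletion set, Z_min the sinks of D - S_min, and x in Z_min. Then no vertex u distinct from x with x in R^-(u) (i.e., u in R^+(x)) belongs to Z_min. -/
open Relation Set

variable {V : Type*}

/-!
If `u` and `x` were both sinks of `D - S`, the path from `x` to `u` avoiding `N⁺(u)` could not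
stay inside `D - S` (it would start with an arc out of the sink `x`), so it has a last vertex
`s ∈ S`, and `s ∉ N⁺(u)`. By minimality, putting `s` back creates a knot `K`, which must contain
`s`, hence also `u`, which is reachable from `s`. In a knot every vertex has an out-arc; but the
only new out-arc `u` could gain goes to `s`, which is not an out-neighbour of `u`.
-/

theorem delArcs_antitone (A : V → V → Prop) : Antitone (delArcs A) :=
  fun _ _ h _ _ hab => ⟨fun hs => hab.1 (h hs), fun hs => hab.2.1 (h hs), hab.2.2⟩

theorem mem_of_reflTransGen_of_closed {r : V → V → Prop} {K : Set V}
    (hK : ∀ a ∈ K, ∀ b, r a b → b ∈ K) {a b : V} (ha : a ∈ K) (h : ReflTransGen r a b) :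
    b ∈ K := by
  induction h with
  | refl => exact ha
  | tail _ hcb ih => exact hK _ ih _ hcb

theorem IsKnot.mem_of_reflTransGen_s4 {r : V → V → Prop} {K : Set V} (hK : IsKnot r K)
    {a b : V} (ha : a ∈ K) (h : ReflTransGen r a b) : b ∈ K :=
  mem_of_reflTransGen_of_closed hK.2.2 ha h

theorem IsKnot.exists_rel {r : V → V → Prop} {K : Set V} (hK : IsKnot r K) {u : V}
    (hu : u ∈ K) : ∃ c, r u c := by
  obtain ⟨v, hv, hvu⟩ := exists_ne_of_one_lt_ncard hK.1 u
  by_contra! hsink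
  exact hvu ((reflTransGen_iff_eq hsink).1 (hK.2.1 u hu v hv))

theorem IsKnot.delArcs_of_inter_subset {A : V → V → Prop} {S S' K : Set V}
    (hK : IsKnot (delArcs A S') K) (hS' : S' ⊆ S) (hKS : K ∩ S ⊆ S') :
    IsKnot (delArcs A S) K := by
  obtain ⟨hcard, hconn, hclosed⟩ := hK
  have hK_notMem : ∀ c ∈ K, c ∉ S' → c ∉ S := fun c hc hcS' hcS => hcS' (hKS ⟨hc, hcS⟩)
  refine ⟨hcard, fun a ha b hb => ?_,
    fun a ha b hab => hclosed a ha b (delArcs_antitone A hS' _ _ hab)⟩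
  induction hconn a ha b hb with
  | refl => exact .refl
  | @tail c b hac hcb ih =>
    have hc : c ∈ K := mem_of_reflTransGen_of_closed hclosed ha hac
    have hb : b ∈ K := hclosed c hc b hcb
    exact (ih hc).tail ⟨hK_notMem c hc hcb.1, hK_notMem b hb hcb.2.1, hcb.2.2⟩

theorem MinimalKFVDS.exists_knot_mem {A : V → V → Prop} {S : Set V} (hS : MinimalKFVDS A S)
    {s : V} (hs : s ∈ S) : ∃ K, IsKnot (delArcs A (S \ {s})) K ∧ s ∈ K := by
  obtain ⟨K, hK⟩ := not_not.1 (hS.2 _ (sdiff_singleton_ssubset.2 hs))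
  refine ⟨K, hK, ?_⟩
  by_contra hsK
  exact hS.1 ⟨K, hK.delArcs_of_inter_subset sdiff_subset
    fun c ⟨hc, hcS⟩ => ⟨hcS, fun hcs => hsK (hcs ▸ hc)⟩⟩

/-- In the second case `s` is the last vertex of the path that lies in `S`. -/
theorem reflTransGen_delArcs_or_exists_last_mem {A : V → V → Prop} {S T : Set V} {w v : V}
    (hv : v ∉ S) (h : ReflTransGen (delArcs A T) w v) :
    (w ∉ S ∧ ReflTransGen (delArcs A S) w v) ∨
      ∃ s ∈ S \ T, ReflTransGen (delArcs A (S \ {s})) s v := by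
  induction h using ReflTransGen.head_induction_on with
  | refl => exact .inl ⟨hv, .refl⟩
  | @head a c hac _ ih =>
    rcases ih with ⟨hcS, hcv⟩ | hlast
    · by_cases haS : a ∈ S
      · refine .inr ⟨a, ⟨haS, hac.1⟩, .head ⟨fun ha => ha.2 rfl, fun hc => hcS hc.1, hac.2.2⟩ ?_⟩
        exact ReflTransGen.mono (delArcs_antitone A sdiff_subset) _ _ hcv
      · exact .inl ⟨haS, hcv.head ⟨haS, hcS, hac.2.2⟩⟩
    · exact .inr hlast

theorem IsSinkIn.eq_of_delArcs_diff_singleton {A : V → V → Prop} {S : Set V} {u s c : V}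
    (hu : IsSinkIn A S u) (h : delArcs A (S \ {s}) u c) : c = s := by
  by_contra hcs
  exact hu.2 c ⟨hu.1, fun hc => h.2.1 ⟨hc, hcs⟩, h.2.2⟩

theorem stmt4_general (A : V → V → Prop) (Smin : Set V)
    (hS : MinimalKFVDS A Smin) (x : V) (hx : x ∈ sinksIn A Smin)
    (u : V) (hne : u ≠ x) (hu : x ∈ RminusSet A u) :
    u ∉ sinksIn A Smin := by
  intro hu_sink
  obtain ⟨s, ⟨hsS, hs_not_out⟩, hsu⟩ :
      ∃ s ∈ Smin \ outNbrs A u, ReflTransGen (delArcs A (Smin \ {s})) s u :=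
    (reflTransGen_delArcs_or_exists_last_mem hu_sink.1 hu).resolve_left
      fun ⟨_, hxu⟩ => hne ((reflTransGen_iff_eq hx.2).1 hxu)
  obtain ⟨K, hK, hsK⟩ := hS.exists_knot_mem hsS
  obtain ⟨c, huc⟩ := hK.exists_rel (hK.mem_of_reflTransGen_s4 hsK hsu)
  exact hs_not_out (hu_sink.eq_of_delArcs_diff_singleton huc ▸ huc.2.2)

/-- If `x` is a sink of `D - S_min` for a minimal knot-free vertex
deletion set `S_min`, then no vertex `u ≠ x` with `x ∈ R^-(u)` (i.e. `u ∈ R^+(x)`)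
is a sink of `D - S_min`. -/
theorem stmt4 [Fintype V] (A : V → V → Prop) (Smin : Set V)
    (hS : MinimalKFVDS A Smin) (x : V) (hx : x ∈ sinksIn A Smin)
    (u : V) (hne : u ≠ x) (hu : x ∈ RminusSet A u) :
    u ∉ sinksIn A Smin :=
  stmt4_general A Smin hS x hx u hne hu
end

section
/- Let D be a finite directed graph and v a vertex with no in-neighbors. Then a set S ⊆ V(D) is a minimum-size knot-free vertex deletion set of D if and only if S is a minimum-size knot-free vertex deletion set of D - v. -/
open Relation Set

variable {V : Type*}

/-!
A vertex `v` without in-arcs lies in no knot, since every vertex of a knot is entered by an arc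
of the knot. Outside `v`, the graphs `D - S` and `D - (S ∪ {v})` have the same arcs, so they have
the same knots: `S` and `S ∪ {v}` are knot-free deletion sets together. Hence a minimum one never
contains `v`, and the knot-free deletion sets of `D - v` are exactly those of `D`.
-/

section Knots

variable {R R' : V → V → Prop} {K : Set V}

theorem IsKnot.exists_arc_to (hK : IsKnot R K) {u : V} (hu : u ∈ K) : ∃ w, R w u := by
  obtain ⟨w, hw, hwu⟩ := Set.exists_ne_of_one_lt_ncard (one_lt_two.trans_le hK.1) u
  rcases (hK.2.1 w hw u hu).cases_tail with rfl | ⟨c, -, hcu⟩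
  · exact absurd rfl hwu
  · exact ⟨c, hcu⟩

theorem IsKnot.notMem_of_forall_not_arc_to (hK : IsKnot R K) {v : V} (hv : ∀ u, ¬ R u v) :
    v ∉ K := fun hvK => (hK.exists_arc_to hvK).elim hv

theorem mem_and_reflTransGen_of_isClosed (hK : ∀ u ∈ K, ∀ w, R u w → w ∈ K)
    (hRR' : ∀ u ∈ K, ∀ w, R u w → R' u w) {u w : V} (hu : u ∈ K)
    (h : ReflTransGen R u w) : w ∈ K ∧ ReflTransGen R' u w := by
  induction h with
  | refl => exact ⟨hu, .refl⟩
  | tail _ hbc ih => exact ⟨hK _ ih.1 _ hbc, ih.2.tail (hRR' _ ih.1 _ hbc)⟩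

theorem isKnot_iff_of_le (hle : R' ≤ R) (hRR' : ∀ u ∈ K, ∀ w, R u w → R' u w) :
    IsKnot R' K ↔ IsKnot R K := by
  constructor
  · rintro ⟨hcard, hconn, hcl⟩
    exact ⟨hcard, fun u hu w hw => ReflTransGen.mono hle _ _ (hconn u hu w hw),
      fun u hu w huw => hcl u hu w (hRR' u hu w huw)⟩
  · rintro ⟨hcard, hconn, hcl⟩
    exact ⟨hcard,
      fun u hu w hw => (mem_and_reflTransGen_of_isClosed hcl hRR' hu (hconn u hu w hw)).2,
      fun u hu w huw => hcl u hu w (hle u w huw)⟩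

end Knots

section Source

variable {A : V → V → Prop} {v : V}

theorem delArcs_delArcs (T S : Set V) :
    delArcs (delArcs A T) S = delArcs A (T ∪ S) := by
  funext u w
  simp only [delArcs, Set.mem_union, not_or, eq_iff_iff]
  tauto

theorem isKnot_delArcs_insert_iff (hv : ∀ u, ¬ A u v) (S K : Set V) :
    IsKnot (delArcs A (insert v S)) K ↔ IsKnot (delArcs A S) K := by
  have hsource : ∀ T : Set V, ∀ u, ¬ delArcs A T u v := fun _ u h => hv u h.2.2
  by_cases hvK : v ∈ K
  · exact iff_of_false (fun hK => hK.notMem_of_forall_not_arc_to (hsource _) hvK)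
      (fun hK => hK.notMem_of_forall_not_arc_to (hsource _) hvK)
  refine isKnot_iff_of_le (fun u w h => ⟨h.1 ∘ Or.inr, h.2.1 ∘ Or.inr, h.2.2⟩) ?_
  rintro u hu w ⟨huS, hwS, huw⟩
  have hwv : w ≠ v := fun hwv => hv u (hwv ▸ huw)
  simp only [delArcs, Set.mem_insert_iff, not_or]
  exact ⟨⟨ne_of_mem_of_not_mem hu hvK, huS⟩, ⟨hwv, hwS⟩, huw⟩

theorem isKFVDS_insert_iff (hv : ∀ u, ¬ A u v) (S : Set V) :
    IsKFVDS A (insert v S) ↔ IsKFVDS A S := by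
  simp only [IsKFVDS, KnotFree, isKnot_delArcs_insert_iff hv]

theorem isKFVDS_delArcs_singleton_iff (hv : ∀ u, ¬ A u v) (S : Set V) :
    IsKFVDS (delArcs A {v}) S ↔ IsKFVDS A S := by
  rw [IsKFVDS, delArcs_delArcs, Set.singleton_union, ← IsKFVDS, isKFVDS_insert_iff hv]

theorem minimumKFVDS_delArcs_singleton_iff (hv : ∀ u, ¬ A u v) (S : Set V) :
    MinimumKFVDS (delArcs A {v}) S ↔ MinimumKFVDS A S := by
  simp only [MinimumKFVDS, isKFVDS_delArcs_singleton_iff hv]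

theorem MinimumKFVDS.notMem_of_forall_not_arc_to {S : Set V} (hS : MinimumKFVDS A S)
    (hfin : S.Finite) (hv : ∀ u, ¬ A u v) : v ∉ S := by
  intro hvS
  have hkf : IsKFVDS A (S \ {v}) := by
    rw [← isKFVDS_insert_iff hv, Set.insert_sdiff_self_of_mem hvS]
    exact hS.1
  exact (Set.ncard_sdiff_singleton_lt_of_mem hvS hfin).not_ge (hS.2 _ hkf)

end Source

/-- If `v` has no in-neighbors, then `S` is a minimum knot-free vertex
deletion set of `D` iff `S` is a minimum knot-free vertex deletion set of `D - v`. -/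
theorem stmt5 [Fintype V] (A : V → V → Prop) (v : V)
    (hv : ∀ u, ¬ A u v) (S : Set V) :
    MinimumKFVDS A S ↔ v ∉ S ∧ MinimumKFVDS (delArcs A {v}) S := by
  rw [minimumKFVDS_delArcs_singleton_iff hv]
  exact ⟨fun h => ⟨h.notMem_of_forall_not_arc_to S.toFinite hv, h⟩, And.right⟩
end

section
/- For every k ≥ 1, the disjoint union of k directed triangles on n = 3k vertices has exactly 3^k = 3^{n/3} inclusion-wise minimal knot-free vertex deletion sets; hence there is an infinite family of directed graphs on n vertices with at least 1.4422^n minimal knot-free vertex deletion sets. -/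
open Relation Set

variable {V : Type*}

/-
Every vertex of a knot has an out-arc (it reaches another vertex of the knot), and a knot is
closed under out-arcs. So a knot of `D_k - S` that meets a triangle contains the whole triangle
and avoids `S`; conversely, a triangle disjoint from `S` is a knot of `D_k - S`. Hence `S` is a
knot-free deletion set exactly when it meets every triangle, and the minimal ones pick exactly
one vertex per triangle: they are the graphs of the `3^k` maps `Fin k → Fin 3`.
-/

lemma IsKnot.exists_arc {A : V → V → Prop} {K : Set V} (hK : IsKnot A K) {v : V} (hv : v ∈ K) :
    ∃ w, A v w := by
  obtain ⟨u, hu, hne⟩ := Set.exists_ne_of_one_lt_ncard hK.1 v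
  rcases (hK.2.1 v hv u hu).cases_head with rfl | ⟨w, hvw, -⟩
  · exact absurd rfl hne
  · exact ⟨w, hvw⟩

open Fin.NatCast in
lemma Fin.forall_of_add_one {m : ℕ} [NeZero m] {P : Fin m → Prop} (hP : ∀ a, P a → P (a + 1))
    {a : Fin m} (ha : P a) (b : Fin m) : P b := by
  have hnat : ∀ n : ℕ, P (a + (n : Fin m)) := by
    intro n
    induction n with
    | zero => simpa using ha
    | succ n ih => simpa [add_assoc] using hP _ ih
  simpa using hnat (b - a).val

/-- `cycles k 3` is `D_k`. -/
def cycles (k m : ℕ) [NeZero m] : Fin k × Fin m → Fin k × Fin m → Prop :=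
  fun u v => u.1 = v.1 ∧ v.2 = u.2 + 1

section Cycles

variable {k m : ℕ} [NeZero m] {S : Set (Fin k × Fin m)}

lemma isKnot_cycle_of_disjoint (hm : 1 < m) {i : Fin k} (hS : ∀ j, (i, j) ∉ S) :
    IsKnot (delArcs (cycles k m) S) {p | p.1 = i} := by
  refine ⟨?_, ?_, ?_⟩
  · exact (Set.one_lt_ncard (Set.toFinite _)).mpr
      ⟨(i, ⟨0, by omega⟩), rfl, (i, ⟨1, hm⟩), rfl, by simp⟩
  · rintro ⟨_, a⟩ rfl ⟨_, b⟩ rfl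
    exact Fin.forall_of_add_one (P := fun b => ReflTransGen _ (_, a) (_, b))
      (fun c hc => hc.tail ⟨hS c, hS (c + 1), rfl, rfl⟩) ReflTransGen.refl b
  · rintro p rfl v ⟨-, -, hpv, -⟩
    exact hpv.symm

lemma IsKnot.cycle_subset {K : Set (Fin k × Fin m)} (hK : IsKnot (delArcs (cycles k m) S) K)
    {i : Fin k} {a : Fin m} (ha : (i, a) ∈ K) (b : Fin m) : (i, b) ∈ K := by
  refine Fin.forall_of_add_one (P := fun b => (i, b) ∈ K) (fun c hc => ?_) ha b
  obtain ⟨w, hw⟩ := hK.exists_arc hc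
  have hw_eq : w = (i, c + 1) := Prod.ext hw.2.2.1.symm hw.2.2.2
  exact hw_eq ▸ hK.2.2 _ hc w hw

lemma isKFVDS_cycles_iff (hm : 1 < m) : IsKFVDS (cycles k m) S ↔ ∀ i, ∃ j, (i, j) ∈ S := by
  constructor
  · intro hS i
    by_contra! hi
    exact hS ⟨_, isKnot_cycle_of_disjoint hm hi⟩
  · rintro hS ⟨K, hK⟩
    obtain ⟨⟨i, a⟩, ha⟩ := Set.nonempty_of_ncard_ne_zero (s := K) (by have := hK.1; omega)
    obtain ⟨j, hj⟩ := hS i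
    obtain ⟨w, hw⟩ := hK.exists_arc (hK.cycle_subset ha j)
    exact hw.1 hj

end Cycles

lemma minimal_hitting_iff_eq_graph {ι κ : Type*} (S : Set (ι × κ)) :
    ((∀ i, ∃ j, (i, j) ∈ S) ∧ ∀ S' ⊂ S, ¬ ∀ i, ∃ j, (i, j) ∈ S') ↔
      ∃ f : ι → κ, Function.graph f = S := by
  constructor
  · rintro ⟨hS, hmin⟩
    choose f hf using hS
    have hsub : Function.graph f ⊆ S := by
      rintro ⟨i, _⟩ rfl
      exact hf i
    exact ⟨f, by_contra fun hne => hmin _ (hsub.ssubset_of_ne hne) fun i => ⟨f i, rfl⟩⟩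
  · rintro ⟨f, rfl⟩
    refine ⟨fun i => ⟨f i, rfl⟩, fun S' hS' hhit => hS'.not_subset ?_⟩
    rintro ⟨i, _⟩ rfl
    obtain ⟨j, hj⟩ := hhit i
    rwa [Function.mem_graph.mp (hS'.subset hj)]

lemma ncard_setOf_minimalKFVDS_cycles {k m : ℕ} [NeZero m] (hm : 1 < m) :
    {S | MinimalKFVDS (cycles k m) S}.ncard = m ^ k := by
  have hset : {S | MinimalKFVDS (cycles k m) S} = Set.range Function.graph := by
    ext S
    simp only [Set.mem_range, MinimalKFVDS, isKFVDS_cycles_iff hm]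
    exact minimal_hitting_iff_eq_graph S
  rw [hset, Set.ncard_range_of_injective Function.graph_injective]
  simp

theorem stmt15_general (k : ℕ) :
    {S : Set (Fin k × Fin 3) |
        MinimalKFVDS (fun u v : Fin k × Fin 3 => u.1 = v.1 ∧ v.2 = u.2 + 1) S}.ncard
      = 3 ^ k ∧
    (1.4422 : ℝ) ^ (3 * k) ≤ (3 : ℝ) ^ k := by
  refine ⟨ncard_setOf_minimalKFVDS_cycles (m := 3) (by norm_num), ?_⟩
  rw [pow_mul]
  exact pow_le_pow_left₀ (by norm_num) (by norm_num) k

/-- The disjoint union of `k ≥ 1` directed triangles (on `n = 3k`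
vertices) has exactly `3^k = 3^{n/3}` minimal knot-free vertex deletion sets, and
`3^k ≥ 1.4422^{3k}`. -/
theorem stmt15 (k : ℕ) (hk : 1 ≤ k) :
    {S : Set (Fin k × Fin 3) |
        MinimalKFVDS (fun u v : Fin k × Fin 3 => u.1 = v.1 ∧ v.2 = u.2 + 1) S}.ncard
      = 3 ^ k ∧
    (1.4422 : ℝ) ^ (3 * k) ≤ (3 : ℝ) ^ k :=
  stmt15_general k
end
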